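/- Suppose ψ(n) = C − Σ_k r_k c_k(n) where C ∈ ℤ, (r_k) is a sequence of integers with finitely many nonzero terms, and c_k is the Ramanujan sum. Then the Dold coefficients satisfy a_1(ψ) = C − Σ_k μ(k) r_k and a_n(ψ) = −Σ_{k : n | k} μ(k/n) r_k for n ≥ 2. -/

import Mathlib

/-!
As a function of `d`, the Ramanujan sum is the divisor sum `c_k(d) = ∑_{e ∣ d} [e ∣ k] μ(k/e) e`,
so Möbius inversion gives `∑_{d ∣ n} μ(n/d) c_k(d) = [n ∣ k] μ(k/n) n`; likewise the constant `C`
inverts to `[n = 1] C`. The Dold coefficients are linear in `ψ`, and the factor `n` cancels `1/n`.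
-/

open Finset ArithmeticFunction
open scoped ArithmeticFunction.Moebius

theorem sum_divisors_moebius_mul_sum_divisors {R : Type*} [NonAssocRing R] (f : ℕ → R) {n : ℕ}
    (hn : n ≠ 0) : ∑ d ∈ n.divisors, (μ (n / d) : R) * ∑ e ∈ d.divisors, f e = f n := by
  have h := (sum_eq_iff_sum_mul_moebius_eq (f := f) (g := fun m => ∑ e ∈ m.divisors, f e)).mp
    (fun _ _ => rfl) n (Nat.pos_of_ne_zero hn)
  rwa [Nat.sum_divisorsAntidiagonal' (f := fun a b => (μ a : R) * ∑ e ∈ b.divisors, f e)] at h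

theorem sum_divisors_moebius_mul_const {R : Type*} [NonAssocRing R] (c : R) {n : ℕ}
    (hn : n ≠ 0) : ∑ d ∈ n.divisors, (μ (n / d) : R) * c = if n = 1 then c else 0 := by
  rw [← sum_divisors_moebius_mul_sum_divisors (fun e => if e = 1 then c else 0) hn]
  refine sum_congr rfl fun d hd => ?_
  rw [sum_ite_eq', if_pos (Nat.one_mem_divisors.mpr ((Nat.pos_of_mem_divisors hd).ne'))]

def ramanujanSum (k n : ℕ) : ℤ :=
  ∑ d ∈ (k.gcd n).divisors, μ (k / d) * (d : ℤ)

theorem ramanujanSum_eq_sum_divisors (k : ℕ) {n : ℕ} (hn : n ≠ 0) :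
    ramanujanSum k n = ∑ d ∈ n.divisors, if d ∣ k then μ (k / d) * (d : ℤ) else 0 := by
  rw [← sum_filter, ramanujanSum]
  congr 1
  ext d
  simp [Nat.dvd_gcd_iff, hn, Nat.gcd_eq_zero_iff, and_comm]

theorem sum_divisors_moebius_mul_ramanujanSum (k : ℕ) {n : ℕ} (hn : n ≠ 0) :
    ∑ d ∈ n.divisors, (μ (n / d) : ℤ) * ramanujanSum k d =
      if n ∣ k then μ (k / n) * (n : ℤ) else 0 := by
  rw [← sum_divisors_moebius_mul_sum_divisors
    (fun d => if d ∣ k then μ (k / d) * (d : ℤ) else 0) hn]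
  refine sum_congr rfl fun d hd => ?_
  rw [ramanujanSum_eq_sum_divisors k ((Nat.pos_of_mem_divisors hd).ne'), Int.cast_id]

theorem sum_divisors_moebius_mul_const_sub_sum_ramanujanSum (C : ℤ) (s : Finset ℕ) (r : ℕ → ℤ)
    {n : ℕ} (hn : n ≠ 0) :
    ∑ d ∈ n.divisors, (μ (n / d) : ℤ) * (C - ∑ k ∈ s, r k * ramanujanSum k d) =
      (if n = 1 then C else 0) - n * ∑ k ∈ s with n ∣ k, μ (k / n) * r k := by
  calc ∑ d ∈ n.divisors, (μ (n / d) : ℤ) * (C - ∑ k ∈ s, r k * ramanujanSum k d)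
      = ∑ d ∈ n.divisors, (μ (n / d) : ℤ) * C -
          ∑ k ∈ s, r k * ∑ d ∈ n.divisors, (μ (n / d) : ℤ) * ramanujanSum k d := by
        simp only [mul_sub, sum_sub_distrib, mul_sum]
        rw [sum_comm]
        refine congrArg _ (sum_congr rfl fun k _ => sum_congr rfl fun d _ => mul_left_comm _ _ _)
    _ = (if n = 1 then C else 0) - ∑ k ∈ s, r k * if n ∣ k then μ (k / n) * (n : ℤ) else 0 := by
        have hC := sum_divisors_moebius_mul_const C hn
        simp only [Int.cast_id] at hC
        simp only [hC, sum_divisors_moebius_mul_ramanujanSum _ hn]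
    _ = (if n = 1 then C else 0) - n * ∑ k ∈ s with n ∣ k, μ (k / n) * r k := by
        rw [sum_filter, mul_sum]
        refine congrArg _ (sum_congr rfl fun k _ => ?_)
        split_ifs <;> ring

def doldCoeff (ψ : ℕ → ℤ) (n : ℕ) : ℚ :=
  (1 / (n : ℚ)) * ∑ d ∈ n.divisors, ((μ (n / d) : ℤ) : ℚ) * (ψ d : ℚ)

theorem doldCoeff_eq_of_eq_const_sub_sum_ramanujanSum {ψ : ℕ → ℤ} (C : ℤ) (s : Finset ℕ)
    (r : ℕ → ℤ) (hψ : ∀ n ≠ 0, ψ n = C - ∑ k ∈ s, r k * ramanujanSum k n) {n : ℕ} (hn : n ≠ 0) :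
    doldCoeff ψ n = (if n = 1 then C else 0 : ℤ) - ∑ k ∈ s with n ∣ k, (μ (k / n) : ℚ) * r k := by
  have hsum : ∑ d ∈ n.divisors, (μ (n / d) : ℤ) * ψ d =
      (if n = 1 then C else 0) - n * ∑ k ∈ s with n ∣ k, μ (k / n) * r k := by
    rw [← sum_divisors_moebius_mul_const_sub_sum_ramanujanSum C s r hn]
    exact sum_congr rfl fun d hd => by rw [hψ d (Nat.pos_of_mem_divisors hd).ne']
  have hcast := congrArg (Int.cast : ℤ → ℚ) hsum
  push_cast at hcast
  rw [doldCoeff, hcast]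
  push_cast
  field_simp
  split_ifs with h1
  · simp [h1]
  · ring

theorem stmt11_general (K : ℕ) (C : ℤ) (r : ℕ → ℤ)
    (ψ : ℕ → ℤ)
    (hψ : ∀ n, 1 ≤ n → ψ n = C - ∑ k ∈ Finset.Icc 1 K, r k *
        ∑ d ∈ (Nat.gcd k n).divisors, ArithmeticFunction.moebius (k / d) * (d : ℤ))
    (a : ℕ → ℚ)
    (ha : ∀ n, 1 ≤ n → a n = (1 / (n : ℚ)) * ∑ d ∈ n.divisors,
        ((ArithmeticFunction.moebius (n / d) : ℤ) : ℚ) * (ψ d : ℚ)) :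
    a 1 = (C : ℚ) - ∑ k ∈ Finset.Icc 1 K,
        ((ArithmeticFunction.moebius k : ℤ) : ℚ) * (r k : ℚ) ∧
    ∀ n, 2 ≤ n → a n = -∑ k ∈ (Finset.Icc 1 K).filter (fun k => n ∣ k),
        ((ArithmeticFunction.moebius (k / n) : ℤ) : ℚ) * (r k : ℚ) := by
  have hψ' : ∀ n ≠ 0, ψ n = C - ∑ k ∈ Icc 1 K, r k * ramanujanSum k n :=
    fun n hn => hψ n (Nat.one_le_iff_ne_zero.mpr hn)
  have hdold : ∀ n ≠ 0, a n = ((if n = 1 then C else 0 : ℤ) : ℚ) -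
      ∑ k ∈ Icc 1 K with n ∣ k, (μ (k / n) : ℚ) * r k := fun n hn =>
    (ha n (Nat.one_le_iff_ne_zero.mpr hn)).trans
      (doldCoeff_eq_of_eq_const_sub_sum_ramanujanSum C _ r hψ' hn)
  refine ⟨?_, fun n hn => ?_⟩
  · simp [hdold 1 one_ne_zero]
  · simp [hdold n (by omega), show n ≠ 1 by omega]

/-- If ψ(n) = C − Σ_k r_k c_k(n), then the Dold coefficients satisfy
a_1(ψ) = C − Σ_k μ(k) r_k and a_n(ψ) = −Σ_{k : n|k} μ(k/n) r_k for n ≥ 2. -/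
theorem stmt11 (K : ℕ) (C : ℤ) (r : ℕ → ℤ) (hr : ∀ k, K < k → r k = 0)
    (ψ : ℕ → ℤ)
    (hψ : ∀ n, 1 ≤ n → ψ n = C - ∑ k ∈ Finset.Icc 1 K, r k *
        ∑ d ∈ (Nat.gcd k n).divisors, ArithmeticFunction.moebius (k / d) * (d : ℤ))
    (a : ℕ → ℚ)
    (ha : ∀ n, 1 ≤ n → a n = (1 / (n : ℚ)) * ∑ d ∈ n.divisors,
        ((ArithmeticFunction.moebius (n / d) : ℤ) : ℚ) * (ψ d : ℚ)) :
    a 1 = (C : ℚ) - ∑ k ∈ Finset.Icc 1 K,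
        ((ArithmeticFunction.moebius k : ℤ) : ℚ) * (r k : ℚ) ∧
    ∀ n, 2 ≤ n → a n = -∑ k ∈ (Finset.Icc 1 K).filter (fun k => n ∣ k),
        ((ArithmeticFunction.moebius (k / n) : ℤ) : ℚ) * (r k : ℚ) :=
  stmt11_general K C r ψ hψ a ha
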